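/- Let Y₁ and Y₂ be independent real random variables on a common probability space such that (Y₁)_{n,λ} and (Y₂)_{n,λ} are integrable for every n ≥ 0. Then for every integer n ≥ 0 and all real x, y: S^{Y₁+Y₂}_{n,λ}(x+y) = Σ_{k=0}^{n} C(n,k)·S^{Y₁}_{k,λ}(x)·S^{Y₂}_{n−k,λ}(y). -/

import Mathlib

open Finset PowerSeries

noncomputable def dff (lam x : ℝ) (n : ℕ) : ℝ := ∏ i ∈ Finset.range n, (x - i * lam)

noncomputable def degExp (lam x : ℝ) : PowerSeries ℝ :=
  PowerSeries.mk fun k => dff lam x k / k.factorial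

open MeasureTheory

/-!
Both the degenerate exponential and the moment series turn sums into products of exponential
generating series: `e_λ^{x+y} = e_λ^x e_λ^y` is the degenerate Vandermonde identity, and for
independent `Y₁, Y₂` the moment series of `Y₁ + Y₂` is the product of those of `Y₁` and `Y₂`.
Dividing, the generating series of `S^{Y₁+Y₂}_{n,λ}(x+y)` is the product of those of
`S^{Y₁}_{n,λ}(x)` and `S^{Y₂}_{n,λ}(y)`, and a product of exponential generating series is the
generating series of the binomial convolution.
-/

def binomConv (a b : ℕ → ℝ) (n : ℕ) : ℝ :=
  ∑ ij ∈ antidiagonal n, (n.choose ij.1 : ℝ) * a ij.1 * b ij.2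

noncomputable def egf (a : ℕ → ℝ) : PowerSeries ℝ := mk fun n => a n / n.factorial

theorem egf_mul (a b : ℕ → ℝ) : egf a * egf b = egf (binomConv a b) := by
  ext n
  simp only [egf, binomConv, coeff_mul, coeff_mk, sum_div]
  refine sum_congr rfl fun ij hij => ?_
  obtain rfl := mem_antidiagonal.mp hij
  have hfac := Nat.choose_mul_factorial_mul_factorial (Nat.le_add_right ij.1 ij.2)
  rw [Nat.add_sub_cancel_left] at hfac
  have hchoose : ((ij.1 + ij.2).choose ij.1 : ℝ) ≠ 0 :=
    Nat.cast_ne_zero.mpr (Nat.choose_pos (Nat.le_add_right _ _)).ne'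
  rw [← hfac]
  push_cast
  field_simp

theorem egf_injective : Function.Injective egf := by
  intro a b h
  funext n
  have := congrArg (coeff n) h
  simp only [egf, coeff_mk] at this
  exact (div_left_inj' (Nat.cast_ne_zero.mpr n.factorial_ne_zero)).mp this

theorem dff_zero (lam x : ℝ) : dff lam x 0 = 1 := prod_range_zero _

theorem dff_succ (lam x : ℝ) (n : ℕ) : dff lam x (n + 1) = dff lam x n * (x - n * lam) :=
  prod_range_succ _ n

theorem measurable_dff (lam : ℝ) (n : ℕ) : Measurable fun x => dff lam x n :=
  Finset.measurable_prod _ fun _ _ => measurable_id.sub_const _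

theorem dff_add (lam x y : ℝ) : dff lam (x + y) = binomConv (dff lam x) (dff lam y) := by
  funext n
  induction n with
  | zero => simp [binomConv, dff_zero]
  | succ n ih =>
    -- on the antidiagonal `i + j = n`, the new factor splits as `(x - iλ) + (y - jλ)`
    have split : ∀ ij ∈ antidiagonal n,
        (n.choose ij.1 : ℝ) * dff lam x ij.1 * dff lam y ij.2 * (x + y - n * lam) =
          (n.choose ij.1 : ℝ) * dff lam x ij.1 * dff lam y (ij.2 + 1) +
            (n.choose ij.2 : ℝ) * dff lam x (ij.1 + 1) * dff lam y ij.2 := by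
      intro ij hij
      obtain rfl := mem_antidiagonal.mp hij
      rw [dff_succ, dff_succ, Nat.choose_symm_add]
      push_cast
      ring
    rw [dff_succ, ih, binomConv, binomConv, sum_mul, sum_congr rfl split, sum_add_distrib]
    simpa only [mul_assoc] using (sum_antidiagonal_choose_succ_mul
      (fun i j => dff lam x i * dff lam y j) n).symm

theorem degExp_eq_egf (lam x : ℝ) : degExp lam x = egf (dff lam x) := rfl

theorem degExp_add (lam x y : ℝ) : degExp lam (x + y) = degExp lam x * degExp lam y := by
  rw [degExp_eq_egf, degExp_eq_egf, degExp_eq_egf, egf_mul, dff_add]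

section Moments

variable {Ω : Type*} [MeasurableSpace Ω] (μ : Measure Ω) (lam : ℝ)

noncomputable def momentEgf (Y : Ω → ℝ) : PowerSeries ℝ := egf fun n => ∫ ω, dff lam (Y ω) n ∂μ

theorem momentEgf_ne_zero [IsProbabilityMeasure μ] (Y : Ω → ℝ) : momentEgf μ lam Y ≠ 0 := by
  intro h
  simpa [momentEgf, egf, dff_zero] using congrArg constantCoeff h

theorem momentEgf_add {Y₁ Y₂ : Ω → ℝ} (hindep : ProbabilityTheory.IndepFun Y₁ Y₂ μ)
    (hY₁ : ∀ n, Integrable (fun ω => dff lam (Y₁ ω) n) μ)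
    (hY₂ : ∀ n, Integrable (fun ω => dff lam (Y₂ ω) n) μ) :
    momentEgf μ lam (Y₁ + Y₂) = momentEgf μ lam Y₁ * momentEgf μ lam Y₂ := by
  rw [momentEgf, momentEgf, momentEgf, egf_mul]
  congr 1
  funext n
  have hind : ∀ i j, ProbabilityTheory.IndepFun
      (fun ω => dff lam (Y₁ ω) i) (fun ω => dff lam (Y₂ ω) j) μ :=
    fun i j => hindep.comp (measurable_dff lam i) (measurable_dff lam j)
  have hint : ∀ ij ∈ antidiagonal n, Integrable
      (fun ω => (n.choose ij.1 : ℝ) * dff lam (Y₁ ω) ij.1 * dff lam (Y₂ ω) ij.2) μ := by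
    intro ij _
    simpa only [Pi.mul_apply, mul_assoc] using
      ((hind _ _).integrable_mul (hY₁ _) (hY₂ _)).const_mul _
  simp only [Pi.add_apply, dff_add, binomConv]
  rw [integral_finsetSum _ hint]
  refine sum_congr rfl fun ij _ => ?_
  simp only [mul_assoc, integral_const_mul]
  rw [(hind _ _).integral_fun_mul_eq_mul_integral (hY₁ _).aestronglyMeasurable
    (hY₂ _).aestronglyMeasurable]

end Moments

theorem stmt10_general (lam : ℝ)
    {Ω : Type*} [MeasurableSpace Ω] (μ : Measure Ω) [IsProbabilityMeasure μ]
    (Y₁ Y₂ : Ω → ℝ)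
    (hindep : ProbabilityTheory.IndepFun Y₁ Y₂ μ)
    (hY₁ : ∀ n : ℕ, Integrable (fun ω => dff lam (Y₁ ω) n) μ)
    (hY₂ : ∀ n : ℕ, Integrable (fun ω => dff lam (Y₂ ω) n) μ)
    (S₁ S₂ S₁₂ : ℝ → ℕ → ℝ)
    (hS₁ : ∀ x, (PowerSeries.mk fun n => S₁ x n / n.factorial) *
        (PowerSeries.mk fun n => (∫ ω, dff lam (Y₁ ω) n ∂μ) / n.factorial) = degExp lam x)
    (hS₂ : ∀ x, (PowerSeries.mk fun n => S₂ x n / n.factorial) *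
        (PowerSeries.mk fun n => (∫ ω, dff lam (Y₂ ω) n ∂μ) / n.factorial) = degExp lam x)
    (hS₁₂ : ∀ x, (PowerSeries.mk fun n => S₁₂ x n / n.factorial) *
        (PowerSeries.mk fun n => (∫ ω, dff lam (Y₁ ω + Y₂ ω) n ∂μ) / n.factorial)
          = degExp lam x)
    (n : ℕ) (x y : ℝ) :
    S₁₂ (x + y) n = ∑ k ∈ Finset.range (n + 1), (n.choose k : ℝ) * S₁ x k * S₂ y (n - k) := by
  have hS : egf (S₁₂ (x + y)) * momentEgf μ lam (Y₁ + Y₂) =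
      egf (S₁ x) * egf (S₂ y) * momentEgf μ lam (Y₁ + Y₂) :=
    calc egf (S₁₂ (x + y)) * momentEgf μ lam (Y₁ + Y₂)
        = degExp lam x * degExp lam y := by rw [← degExp_add]; exact hS₁₂ (x + y)
      _ = egf (S₁ x) * momentEgf μ lam Y₁ * (egf (S₂ y) * momentEgf μ lam Y₂) := by
          rw [← hS₁ x, ← hS₂ y]; rfl
      _ = egf (S₁ x) * egf (S₂ y) * momentEgf μ lam (Y₁ + Y₂) := by
          rw [momentEgf_add μ lam hindep hY₁ hY₂]; ring
  have hconv : S₁₂ (x + y) = binomConv (S₁ x) (S₂ y) := by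
    rw [egf_mul] at hS
    exact egf_injective (mul_right_cancel₀ (momentEgf_ne_zero μ lam _) hS)
  rw [congrFun hconv n, binomConv, Nat.sum_antidiagonal_eq_sum_range_succ
    (fun i j => (n.choose i : ℝ) * S₁ x i * S₂ y j)]

theorem stmt10 (lam : ℝ) (hlam : lam ≠ 0)
    {Ω : Type*} [MeasurableSpace Ω] (μ : Measure Ω) [IsProbabilityMeasure μ]
    (Y₁ Y₂ : Ω → ℝ) (hY₁m : Measurable Y₁) (hY₂m : Measurable Y₂)
    (hindep : ProbabilityTheory.IndepFun Y₁ Y₂ μ)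
    (hY₁ : ∀ n : ℕ, Integrable (fun ω => dff lam (Y₁ ω) n) μ)
    (hY₂ : ∀ n : ℕ, Integrable (fun ω => dff lam (Y₂ ω) n) μ)
    (S₁ S₂ S₁₂ : ℝ → ℕ → ℝ)
    (hS₁ : ∀ x, (PowerSeries.mk fun n => S₁ x n / n.factorial) *
        (PowerSeries.mk fun n => (∫ ω, dff lam (Y₁ ω) n ∂μ) / n.factorial) = degExp lam x)
    (hS₂ : ∀ x, (PowerSeries.mk fun n => S₂ x n / n.factorial) *
        (PowerSeries.mk fun n => (∫ ω, dff lam (Y₂ ω) n ∂μ) / n.factorial) = degExp lam x)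
    (hS₁₂ : ∀ x, (PowerSeries.mk fun n => S₁₂ x n / n.factorial) *
        (PowerSeries.mk fun n => (∫ ω, dff lam (Y₁ ω + Y₂ ω) n ∂μ) / n.factorial)
          = degExp lam x)
    (n : ℕ) (x y : ℝ) :
    S₁₂ (x + y) n = ∑ k ∈ Finset.range (n + 1), (n.choose k : ℝ) * S₁ x k * S₂ y (n - k) :=
  stmt10_general lam μ Y₁ Y₂ hindep hY₁ hY₂ S₁ S₂ S₁₂ hS₁ hS₂ hS₁₂ n x y
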